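/- Let K ⊂ ℝⁿ be a convex body with 0 in its interior which is strongly convex with smooth boundary, i.e. the function h_K(x) := μ_K(x)²/2 is C^∞ on ℝⁿ \ {0} and its Hessian is positive definite at every point of the unit sphere. Then the gradient map ∇h_K maps the boundary ∂K bijectively onto the boundary ∂K° of the polar body; for every y ∈ ∂K° the unique x ∈ ∂K with ⟪x, y⟫ = 1 is x = (∇h_K)⁻¹(y); moreover h_{K°}(y) = h_K((∇h_K)⁻¹(y)) for all y ∈ ℝⁿ \ {0}, and in particular h_{K°} is C^∞ on ℝⁿ \ {0} with positive definite Hessian on the unit sphere (so K° is also strongly convex with smooth boundary). -/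

import Mathlib

open MeasureTheory Real Set
open scoped RealInnerProductSpace

noncomputable section

/-- `h_K = μ_K²/2`, where `μ_K` is the Minkowski gauge of `K`. -/
def hGauge {n : ℕ} (K : Set (EuclideanSpace ℝ (Fin n))) (x : EuclideanSpace ℝ (Fin n)) : ℝ :=
  gauge K x ^ 2 / 2

/-- The polar body `K° = {y : ⟪x, y⟫ ≤ 1 for all x ∈ K}`. -/
def polarBodyN {n : ℕ} (K : Set (EuclideanSpace ℝ (Fin n))) : Set (EuclideanSpace ℝ (Fin n)) :=
  {y | ∀ x ∈ K, ⟪x, y⟫ ≤ 1}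

open Filter Topology

/-!
Write `h = h_K`. Since `h` is positively homogeneous of degree 2, `∇h` is homogeneous of degree 1
and `D²h` of degree 0, so everything reduces to the level set `∂K = {μ_K = 1}`, and the Hessian
is positive definite on all of `ℝⁿ \ {0}`. For `x ∈ ∂K`, Euler's identity gives `⟪x, ∇h x⟫ = 1`,
and `h` attains its maximum over `K` at `x`, which forces `∇h x ∈ K°`; hence `∇h x ∈ ∂K°`.
Conversely, for `y ∈ ∂K°` a maximiser `x` of `⟪·, y⟫` on `K` lies on `∂K` with `⟪x, y⟫ = 1`, and
`x` minimises `h - ⟪·, y⟫`, so `∇h x = y`. The map `∇h` is injective on `ℝⁿ \ {0}`: along a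
segment avoiding `0` it is strictly monotone because the Hessian is positive, and two points of a
segment through `0` cannot share a gradient by Euler's identity. Finally the inverse function
theorem makes `(∇h)⁻¹` smooth near every point; `h_{K°} = h ∘ (∇h)⁻¹` and `∇h_{K°} = (∇h)⁻¹`,
so `h_{K°}` is smooth with Hessian `(D²h)⁻¹`, which is positive definite.
-/

section NormedSpace

variable {F G : Type*} [NormedAddCommGroup F] [NormedSpace ℝ F] [NormedAddCommGroup G]
  [NormedSpace ℝ G]

def IsPosHomogeneous (k : ℕ) (f : F → G) : Prop :=
  ∀ t : ℝ, 0 < t → ∀ x, f (t • x) = t ^ k • f x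

theorem isPosHomogeneous_id : IsPosHomogeneous 1 (id : F → F) := fun t _ x => by simp

theorem isPosHomogeneous_gauge (s : Set F) : IsPosHomogeneous 1 (gauge s) := fun t ht x => by
  rw [gauge_smul_of_nonneg ht.le, pow_one]

namespace IsPosHomogeneous

variable {k : ℕ} {f : F → G}

theorem comp {j : ℕ} {φ : F → F} (hf : IsPosHomogeneous k f) (hφ : IsPosHomogeneous j φ) :
    IsPosHomogeneous (k * j) (f ∘ φ) := fun t ht x => by
  rw [Function.comp_apply, hφ t ht, hf _ (pow_pos ht j), ← pow_mul, mul_comm, Function.comp_apply]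

theorem fderiv_apply_self (hf : IsPosHomogeneous k f) {x : F} (hx : DifferentiableAt ℝ f x) :
    fderiv ℝ f x x = (k : ℝ) • f x := by
  have hray : HasDerivAt (fun t : ℝ => f (t • x)) (fderiv ℝ f x x) 1 := by
    have hf' : HasFDerivAt f (fderiv ℝ f x) ((1 : ℝ) • x) := by
      rw [one_smul]; exact hx.hasFDerivAt
    have h := hf'.comp_hasDerivAt 1 ((hasDerivAt_id (1 : ℝ)).smul_const x)
    rwa [one_smul] at h
  have hpow : HasDerivAt (fun t : ℝ => t ^ k • f x) ((k : ℝ) • f x) 1 := by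
    simpa using (hasDerivAt_pow k (1 : ℝ)).smul_const (f x)
  refine hray.unique (hpow.congr_of_eventuallyEq ?_)
  filter_upwards [lt_mem_nhds one_pos] with t ht using hf t ht x

protected theorem fderiv (hf : IsPosHomogeneous (k + 1) f) :
    IsPosHomogeneous k (fderiv ℝ f) := by
  intro t ht x
  have h := fderiv_comp_smul (f := f) (x := x) t
  rw [show (fun y => f (t • y)) = t ^ (k + 1) • f from funext (hf t ht),
    fderiv_const_smul_field, Pi.smul_apply] at h
  apply smul_right_injective _ ht.ne'
  change t • fderiv ℝ f (t • x) = t • t ^ k • fderiv ℝ f x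
  rw [← h, smul_smul, ← pow_succ']

theorem apply_eq_of_eqOn_preimage_one {μ : F → ℝ} {g : F → G} (hf : IsPosHomogeneous k f)
    (hg : IsPosHomogeneous k g) (hμ : IsPosHomogeneous 1 μ) (h : EqOn f g (μ ⁻¹' {1}))
    {x : F} (hx : 0 < μ x) : f x = g x := by
  have hu : μ ((μ x)⁻¹ • x) = 1 := by
    rw [hμ _ (inv_pos.2 hx), pow_one, smul_eq_mul, inv_mul_cancel₀ hx.ne']
  have hx' : x = μ x • (μ x)⁻¹ • x := by rw [smul_smul, mul_inv_cancel₀ hx.ne', one_smul]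
  rw [hx', hf _ hx, hg _ hx, h hu]

end IsPosHomogeneous

theorem fderiv_apply_sub_lt_fderiv_apply_sub {f : F → ℝ} {U : Set F} (hU : IsOpen U)
    (hf : ContDiffOn ℝ 2 f U) (hpos : ∀ x ∈ U, ∀ v, v ≠ 0 → 0 < fderiv ℝ (fderiv ℝ f) x v v)
    {a b : F} (hab : a ≠ b) (hseg : segment ℝ a b ⊆ U) :
    fderiv ℝ f a (b - a) < fderiv ℝ f b (b - a) := by
  set w := b - a
  have hU' : ∀ t ∈ Icc (0 : ℝ) 1, a + t • w ∈ U := fun t ht =>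
    hseg (segment_eq_image' ℝ a b ▸ ⟨t, ht, rfl⟩)
  have hdiff : DifferentiableOn ℝ (fderiv ℝ f) U :=
    (hf.fderiv_of_isOpen hU (m := 1) le_rfl).differentiableOn one_ne_zero
  have hderiv : ∀ t ∈ Icc (0 : ℝ) 1, HasDerivAt (fun s : ℝ => fderiv ℝ f (a + s • w) w)
      (fderiv ℝ (fderiv ℝ f) (a + t • w) w w) t := fun t ht => by
    have hline : HasDerivAt (fun s : ℝ => a + s • w) w t := by
      simpa using ((hasDerivAt_id t).smul_const w).const_add a
    exact (ContinuousLinearMap.apply ℝ ℝ w).hasFDerivAt.comp_hasDerivAt t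
      (((hdiff _ (hU' t ht)).differentiableAt (hU.mem_nhds (hU' t ht))).hasFDerivAt.comp_hasDerivAt
        t hline)
  have hmono : StrictMonoOn (fun s : ℝ => fderiv ℝ f (a + s • w) w) (Icc 0 1) := by
    refine strictMonoOn_of_deriv_pos (convex_Icc 0 1)
      (fun t ht => (hderiv t ht).continuousAt.continuousWithinAt) fun t ht => ?_
    rw [interior_Icc] at ht
    rw [(hderiv t (Ioo_subset_Icc_self ht)).deriv]
    exact hpos _ (hU' t (Ioo_subset_Icc_self ht)) w (sub_ne_zero.2 hab.symm)
  simpa [w] using hmono (left_mem_Icc.2 zero_le_one) (right_mem_Icc.2 zero_le_one) one_pos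

end NormedSpace

section InnerProductSpace

variable {E : Type*} [NormedAddCommGroup E] [InnerProductSpace ℝ E] [CompleteSpace E]

protected theorem IsPosHomogeneous.gradient {k : ℕ} {f : E → ℝ}
    (hf : IsPosHomogeneous (k + 1) f) : IsPosHomogeneous k (gradient f) := fun t ht x => by
  simp [gradient, hf.fderiv t ht x]

theorem fderiv_fderiv_apply_eq_inner (f : E → ℝ) (x v w : E) :
    fderiv ℝ (fderiv ℝ f) x v w = ⟪fderiv ℝ (gradient f) x v, w⟫ := by
  let D : E ≃L[ℝ] StrongDual ℝ E := (InnerProductSpace.toDual ℝ E).toContinuousLinearEquiv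
  have h : fderiv ℝ f = D ∘ gradient f := toDual_comp_gradient.symm
  rw [h, D.comp_fderiv]
  rfl

theorem ContDiffAt.gradient {f : E → ℝ} {x : E} {m n : WithTop ℕ∞} (hf : ContDiffAt ℝ n f x)
    (hmn : m + 1 ≤ n) : ContDiffAt ℝ m (gradient f) x :=
  (((InnerProductSpace.toDual ℝ E).symm.toContinuousLinearEquiv :
    StrongDual ℝ E ≃L[ℝ] E).contDiff.contDiffAt).comp x (hf.fderiv_right hmn)

theorem exists_localInverse_gradient [FiniteDimensional ℝ E] {f : E → ℝ} {x₀ : E}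
    (hf : ContDiffAt ℝ (⊤ : ℕ∞) f x₀)
    (hpos : ∀ v, v ≠ 0 → 0 < fderiv ℝ (fderiv ℝ f) x₀ v v) :
    ∃ (g : E → E) (B : E →L[ℝ] E), g (gradient f x₀) = x₀ ∧
      ContDiffAt ℝ (⊤ : ℕ∞) g (gradient f x₀) ∧ HasFDerivAt g B (gradient f x₀) ∧
      (∀ v, v ≠ 0 → 0 < ⟪B v, v⟫) ∧ ∀ᶠ y in 𝓝 (gradient f x₀), gradient f (g y) = y := by
  set A := fderiv ℝ (gradient f) x₀
  have hA : ∀ v, v ≠ 0 → 0 < ⟪A v, v⟫ := fun v hv =>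
    fderiv_fderiv_apply_eq_inner f x₀ v v ▸ hpos v hv
  have hinj : Function.Injective A := by
    refine (injective_iff_map_eq_zero A).2 fun v hv => ?_
    by_contra h
    simpa [hv] using hA v h
  set A' : E ≃L[ℝ] E :=
    (LinearEquiv.ofInjectiveEndo (A : E →ₗ[ℝ] E) hinj).toContinuousLinearEquiv
  have hgrad : ContDiffAt ℝ (⊤ : ℕ∞) (gradient f) x₀ := hf.gradient (by simp)
  have hn : ((⊤ : ℕ∞) : WithTop ℕ∞) ≠ 0 := by simp
  have hA' : HasFDerivAt (gradient f) (A' : E →L[ℝ] E) x₀ :=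
    (hgrad.differentiableAt hn).hasFDerivAt
  have hstrict := hgrad.hasStrictFDerivAt' hA' hn
  refine ⟨hgrad.localInverse hA' hn, (A'.symm : E →L[ℝ] E),
    hstrict.localInverse_apply_image, hgrad.to_localInverse hA' hn,
    hstrict.to_localInverse.hasFDerivAt, fun v hv => ?_, hstrict.eventually_right_inverse⟩
  obtain ⟨u, rfl⟩ := A'.surjective v
  have hu : u ≠ 0 := by rintro rfl; simp at hv
  rw [ContinuousLinearEquiv.coe_coe, A'.symm_apply_apply, real_inner_comm]
  exact hA u hu

end InnerProductSpace

section Polar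

variable {n : ℕ}

local notation "E" => EuclideanSpace ℝ (Fin n)

variable {K : Set (EuclideanSpace ℝ (Fin n))} {x y : EuclideanSpace ℝ (Fin n)}

theorem isPosHomogeneous_hGauge (K : Set E) : IsPosHomogeneous 2 (hGauge K) := fun t ht x => by
  simp only [hGauge, gauge_smul_of_nonneg ht.le, smul_eq_mul]
  ring

theorem inner_gradient_hGauge (hd : DifferentiableAt ℝ (hGauge K) x) :
    ⟪x, gradient (hGauge K) x⟫ = gauge K x ^ 2 := by
  rw [real_inner_comm, inner_gradient_left, (isPosHomogeneous_hGauge K).fderiv_apply_self hd,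
    hGauge]
  ring

theorem polarBodyN_eq_biInter (K : Set E) : polarBodyN K = ⋂ x ∈ K, {y | ⟪x, y⟫ ≤ 1} := by
  ext y
  simp [polarBodyN]

theorem convex_polarBodyN (K : Set E) : Convex ℝ (polarBodyN K) := by
  rw [polarBodyN_eq_biInter]
  exact convex_iInter₂ fun x _ => convex_halfSpace_le (innerₛₗ ℝ x).isLinear 1

theorem isClosed_polarBodyN (K : Set E) : IsClosed (polarBodyN K) := by
  rw [polarBodyN_eq_biInter]
  exact isClosed_biInter fun x _ => isClosed_le (continuous_const.inner continuous_id)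
    continuous_const

theorem subset_polarBodyN_polarBodyN (K : Set E) : K ⊆ polarBodyN (polarBodyN K) :=
  fun x hx y hy => (real_inner_comm x y).trans_le (hy x hx)

theorem polarBodyN_mem_nhds_zero (hK : Bornology.IsBounded K) : polarBodyN K ∈ 𝓝 0 := by
  obtain ⟨R, hR0, hR⟩ := hK.exists_pos_norm_le
  filter_upwards [Metric.ball_mem_nhds (0 : E) (inv_pos.2 hR0)] with y hy x hx
  calc ⟪x, y⟫ ≤ ‖x‖ * ‖y‖ := real_inner_le_norm x y
    _ ≤ R * R⁻¹ := mul_le_mul (hR x hx) (mem_ball_zero_iff.1 hy).le (norm_nonneg _) hR0.le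
    _ = 1 := mul_inv_cancel₀ hR0.ne'

theorem isBounded_polarBodyN (hK : K ∈ 𝓝 0) : Bornology.IsBounded (polarBodyN K) := by
  obtain ⟨r, hr0, hr⟩ := Metric.nhds_basis_closedBall.mem_iff.1 hK
  refine (Metric.isBounded_closedBall (x := (0 : E)) (r := r⁻¹)).subset fun y hy => ?_
  rw [mem_closedBall_zero_iff]
  rcases eq_or_ne y 0 with rfl | hy0
  · simpa using hr0.le
  have hy' : 0 < ‖y‖ := norm_pos_iff.2 hy0
  have hx : (r / ‖y‖) • y ∈ K := hr (by simp [norm_smul, abs_of_pos hr0, hy'.ne'])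
  have h := hy _ hx
  rw [real_inner_smul_left, real_inner_self_eq_norm_sq] at h
  rw [← one_div, le_div_iff₀' hr0]
  calc r * ‖y‖ = r / ‖y‖ * ‖y‖ ^ 2 := by field_simp
    _ ≤ 1 := h

theorem inner_le_gauge_of_mem_polarBodyN (hK : Absorbent ℝ K) (hy : y ∈ polarBodyN K) (x : E) :
    ⟪x, y⟫ ≤ gauge K x := by
  by_contra! h
  obtain ⟨b, hb0, hbx, w, hw, rfl⟩ := exists_lt_of_gauge_lt hK h
  rw [real_inner_smul_left] at hbx
  nlinarith [hy w hw]

theorem exists_inner_eq_gauge_polarBodyN (hK : IsCompact K) (h0 : 0 ∈ K) (y : E) :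
    ∃ x ∈ K, ⟪x, y⟫ = gauge (polarBodyN K) y := by
  obtain ⟨x, hxK, hmax⟩ := hK.exists_isMaxOn ⟨0, h0⟩
    (continuous_id.inner continuous_const : Continuous fun z : E => ⟪z, y⟫).continuousOn
  refine ⟨x, hxK, le_antisymm ?_ (le_of_forall_gt_imp_ge_of_dense fun c hc => ?_)⟩
  · rw [real_inner_comm]
    exact inner_le_gauge_of_mem_polarBodyN
      (absorbent_nhds_zero (polarBodyN_mem_nhds_zero hK.isBounded))
      (subset_polarBodyN_polarBodyN K hxK) y
  · have hc0 : 0 < c := lt_of_le_of_lt (by simpa using hmax h0) hc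
    refine gauge_le_of_mem hc0.le ((mem_smul_set_iff_inv_smul_mem₀ hc0.ne' _ _).2 fun z hz => ?_)
    rw [real_inner_smul_right, inv_mul_le_one₀ hc0]
    exact (hmax hz).trans hc.le

theorem mem_frontier_of_inner_eq_one (hconv : Convex ℝ K) (h0 : K ∈ 𝓝 0) (hx : x ∈ K)
    (hy : y ∈ polarBodyN K) (hxy : ⟪x, y⟫ = 1) : x ∈ frontier K := by
  rw [← gauge_eq_one_iff_mem_frontier hconv h0]
  exact le_antisymm (gauge_le_one_of_mem hx)
    (hxy ▸ inner_le_gauge_of_mem_polarBodyN (absorbent_nhds_zero h0) hy x)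

theorem gradient_hGauge_eq_of_inner_eq_one (hK : Absorbent ℝ K) (hy : y ∈ polarBodyN K)
    (hx : gauge K x = 1) (hxy : ⟪x, y⟫ = 1) (hd : DifferentiableAt ℝ (hGauge K) x) :
    gradient (hGauge K) x = y := by
  -- `x` minimises `h_K - ⟪y, ·⟫`: `⟪z, y⟫ ≤ μ_K(z) ≤ (μ_K(z)² + 1)/2`, with equality at `z = x`
  have hmin : IsLocalMin (fun z => hGauge K z - ⟪y, z⟫) x := Eventually.of_forall fun z => by
    have := inner_le_gauge_of_mem_polarBodyN hK hy z
    rw [real_inner_comm] at hxy this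
    simp only [hGauge, hx, hxy]
    nlinarith [sq_nonneg (gauge K z - 1)]
  have h0 := hmin.hasFDerivAt_eq_zero (hd.hasFDerivAt.sub (innerSL ℝ y).hasFDerivAt)
  refine ext_inner_right ℝ fun v => ?_
  rw [inner_gradient_left, sub_eq_zero.1 h0, innerSL_apply_apply]

theorem gradient_hGauge_mem_polarBodyN (hconv : Convex ℝ K) (hx : x ∈ K) (hx1 : gauge K x = 1)
    (hd : DifferentiableAt ℝ (hGauge K) x) : gradient (hGauge K) x ∈ polarBodyN K := by
  intro z hz
  have hmax : IsMaxOn (hGauge K) K x := isMaxOn_iff.2 fun w hw => by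
    simp only [hGauge, hx1]
    nlinarith [gauge_le_one_of_mem hw, gauge_nonneg (s := K) w]
  have hdir : fderiv ℝ (hGauge K) x (z - x) ≤ 0 :=
    hmax.localize.hasFDerivWithinAt_nonpos hd.hasFDerivAt.hasFDerivWithinAt
      (sub_mem_posTangentConeAt_of_segment_subset (hconv.segment_subset hx hz))
  have heuler : fderiv ℝ (hGauge K) x x = 1 := by
    rw [← inner_gradient_left, real_inner_comm, inner_gradient_hGauge hd, hx1, one_pow]
  rw [map_sub, heuler] at hdir
  rw [real_inner_comm, inner_gradient_left]
  linarith

structure IsConvexBodyAroundZero (K : Set E) : Prop where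
  isCompact : IsCompact K
  convex : Convex ℝ K
  zero_mem_interior : (0 : E) ∈ interior K

structure IsSmoothStronglyConvexBody (K : Set E) : Prop extends IsConvexBodyAroundZero K where
  contDiffOn_hGauge : ContDiffOn ℝ (⊤ : ℕ∞) (hGauge K) {0}ᶜ
  fderiv_fderiv_hGauge_pos : ∀ x : E, ‖x‖ = 1 → ∀ v : E, v ≠ 0 →
    0 < fderiv ℝ (fderiv ℝ (hGauge K)) x v v

namespace IsConvexBodyAroundZero

theorem mem_nhds_zero (hK : IsConvexBodyAroundZero K) : K ∈ 𝓝 0 :=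
  mem_interior_iff_mem_nhds.1 hK.zero_mem_interior

theorem gauge_pos (hK : IsConvexBodyAroundZero K) (hx : x ≠ 0) : 0 < gauge K x :=
  (_root_.gauge_pos (absorbent_nhds_zero hK.mem_nhds_zero)
    ((NormedSpace.isVonNBounded_iff ℝ).2 hK.isCompact.isBounded)).2 hx

theorem ne_zero_of_mem_frontier (hK : IsConvexBodyAroundZero K) (hx : x ∈ frontier K) : x ≠ 0 :=
  fun h => hx.2 (h ▸ hK.zero_mem_interior)

theorem gauge_eq_one_iff_mem_frontier (hK : IsConvexBodyAroundZero K) :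
    gauge K x = 1 ↔ x ∈ frontier K :=
  _root_.gauge_eq_one_iff_mem_frontier hK.convex hK.mem_nhds_zero

theorem polar (hK : IsConvexBodyAroundZero K) : IsConvexBodyAroundZero (polarBodyN K) where
  isCompact := Metric.isCompact_of_isClosed_isBounded (isClosed_polarBodyN K)
    (isBounded_polarBodyN hK.mem_nhds_zero)
  convex := convex_polarBodyN K
  zero_mem_interior := mem_interior_iff_mem_nhds.2 (polarBodyN_mem_nhds_zero hK.isCompact.isBounded)

theorem exists_mem_frontier_inner_eq_one (hK : IsConvexBodyAroundZero K)
    (hy : y ∈ frontier (polarBodyN K)) : ∃ x ∈ frontier K, ⟪x, y⟫ = 1 := by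
  obtain ⟨x, hxK, hxy⟩ :=
    exists_inner_eq_gauge_polarBodyN hK.isCompact (mem_of_mem_nhds hK.mem_nhds_zero) y
  rw [hK.polar.gauge_eq_one_iff_mem_frontier.2 hy] at hxy
  exact ⟨x, mem_frontier_of_inner_eq_one hK.convex hK.mem_nhds_zero hxK
    (hK.polar.isCompact.isClosed.frontier_subset hy) hxy, hxy⟩

theorem gradient_eq_of_inner_eq_one (hK : IsConvexBodyAroundZero K)
    (hd : DifferentiableOn ℝ (hGauge K) {0}ᶜ) (hy : y ∈ frontier (polarBodyN K))
    (hx : x ∈ frontier K) (hxy : ⟪x, y⟫ = 1) : gradient (hGauge K) x = y :=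
  gradient_hGauge_eq_of_inner_eq_one (absorbent_nhds_zero hK.mem_nhds_zero)
    (hK.polar.isCompact.isClosed.frontier_subset hy) (hK.gauge_eq_one_iff_mem_frontier.2 hx) hxy
    (hd.differentiableAt (isOpen_compl_singleton.mem_nhds (hK.ne_zero_of_mem_frontier hx)))

theorem gradient_mem_frontier_polarBodyN (hK : IsConvexBodyAroundZero K)
    (hd : DifferentiableOn ℝ (hGauge K) {0}ᶜ) (hx : x ∈ frontier K) :
    gradient (hGauge K) x ∈ frontier (polarBodyN K) := by
  have hxK : x ∈ K := hK.isCompact.isClosed.frontier_subset hx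
  have hx1 : gauge K x = 1 := hK.gauge_eq_one_iff_mem_frontier.2 hx
  have hdx : DifferentiableAt ℝ (hGauge K) x :=
    hd.differentiableAt (isOpen_compl_singleton.mem_nhds (hK.ne_zero_of_mem_frontier hx))
  refine mem_frontier_of_inner_eq_one (convex_polarBodyN K) hK.polar.mem_nhds_zero
    (gradient_hGauge_mem_polarBodyN hK.convex hxK hx1 hdx) (subset_polarBodyN_polarBodyN K hxK) ?_
  rw [real_inner_comm, inner_gradient_hGauge hdx, hx1, one_pow]

theorem surjOn_gradient_frontier (hK : IsConvexBodyAroundZero K)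
    (hd : DifferentiableOn ℝ (hGauge K) {0}ᶜ) :
    SurjOn (gradient (hGauge K)) (frontier K) (frontier (polarBodyN K)) := fun y hy => by
  obtain ⟨x, hx, hxy⟩ := hK.exists_mem_frontier_inner_eq_one hy
  exact ⟨x, hx, hK.gradient_eq_of_inner_eq_one hd hy hx hxy⟩

theorem gauge_polarBodyN_gradient (hK : IsConvexBodyAroundZero K)
    (hd : DifferentiableOn ℝ (hGauge K) {0}ᶜ) (hx : x ≠ 0) :
    gauge (polarBodyN K) (gradient (hGauge K) x) = gauge K x := by
  have hhom := (isPosHomogeneous_gauge (polarBodyN K)).comp (isPosHomogeneous_hGauge K).gradient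
  refine hhom.apply_eq_of_eqOn_preimage_one (isPosHomogeneous_gauge K) (isPosHomogeneous_gauge K)
    (fun u hu => ?_) (hK.gauge_pos hx)
  rw [Function.comp_apply, hK.polar.gauge_eq_one_iff_mem_frontier.2
    (hK.gradient_mem_frontier_polarBodyN hd (hK.gauge_eq_one_iff_mem_frontier.1 hu))]
  exact hu.symm

theorem hGauge_polarBodyN_gradient (hK : IsConvexBodyAroundZero K)
    (hd : DifferentiableOn ℝ (hGauge K) {0}ᶜ) (hx : x ≠ 0) :
    hGauge (polarBodyN K) (gradient (hGauge K) x) = hGauge K x := by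
  rw [hGauge, hGauge, hK.gauge_polarBodyN_gradient hd hx]

theorem mapsTo_gradient_compl_zero (hK : IsConvexBodyAroundZero K)
    (hd : DifferentiableOn ℝ (hGauge K) {0}ᶜ) :
    MapsTo (gradient (hGauge K)) {0}ᶜ {0}ᶜ := fun x hx h0 => by
  have := hK.gauge_polarBodyN_gradient hd hx
  rw [h0, gauge_zero] at this
  exact (hK.gauge_pos hx).ne this

theorem surjOn_gradient_compl_zero (hK : IsConvexBodyAroundZero K)
    (hd : DifferentiableOn ℝ (hGauge K) {0}ᶜ) :
    SurjOn (gradient (hGauge K)) {0}ᶜ {0}ᶜ := fun y hy => by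
  set t := gauge (polarBodyN K) y
  have ht : 0 < t := hK.polar.gauge_pos hy
  have hu : t⁻¹ • y ∈ frontier (polarBodyN K) := by
    rw [← hK.polar.gauge_eq_one_iff_mem_frontier, isPosHomogeneous_gauge _ _ (inv_pos.2 ht),
      pow_one, smul_eq_mul, inv_mul_cancel₀ ht.ne']
  obtain ⟨x, hx, hxu⟩ := hK.surjOn_gradient_frontier hd hu
  refine ⟨t • x, smul_ne_zero ht.ne' (hK.ne_zero_of_mem_frontier hx), ?_⟩
  rw [(isPosHomogeneous_hGauge K).gradient t ht, pow_one, hxu, smul_inv_smul₀ ht.ne']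

end IsConvexBodyAroundZero

namespace IsSmoothStronglyConvexBody

theorem contDiffAt_hGauge (hK : IsSmoothStronglyConvexBody K) (hx : x ≠ 0) :
    ContDiffAt ℝ (⊤ : ℕ∞) (hGauge K) x :=
  hK.contDiffOn_hGauge.contDiffAt (isOpen_compl_singleton.mem_nhds hx)

theorem differentiableOn_hGauge (hK : IsSmoothStronglyConvexBody K) :
    DifferentiableOn ℝ (hGauge K) {0}ᶜ :=
  hK.contDiffOn_hGauge.differentiableOn (by simp)

theorem fderiv_fderiv_hGauge_pos_of_ne_zero (hK : IsSmoothStronglyConvexBody K) (hx : x ≠ 0)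
    {v : E} (hv : v ≠ 0) : 0 < fderiv ℝ (fderiv ℝ (hGauge K)) x v v := by
  have hx' : 0 < ‖x‖ := norm_pos_iff.2 hx
  rw [← smul_inv_smul₀ hx'.ne' x, (isPosHomogeneous_hGauge K).fderiv.fderiv _ hx', pow_zero,
    one_smul]
  exact hK.fderiv_fderiv_hGauge_pos _ (by simp [norm_smul, hx'.ne']) v hv

theorem injOn_gradient (hK : IsSmoothStronglyConvexBody K) :
    InjOn (gradient (hGauge K)) {0}ᶜ := by
  intro a ha b hb hab
  by_contra hne
  by_cases h0 : (0 : E) ∈ segment ℝ a b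
  · -- `0 = θa • a + θb • b`, yet by Euler's identity the common gradient pairs positively with
    -- both `a` and `b`
    obtain ⟨θa, θb, hθa, hθb, hθ, h0⟩ := h0
    have hpa := inner_gradient_hGauge (hK.differentiableOn_hGauge.differentiableAt
      (isOpen_compl_singleton.mem_nhds ha))
    have hpb := inner_gradient_hGauge (hK.differentiableOn_hGauge.differentiableAt
      (isOpen_compl_singleton.mem_nhds hb))
    have h := congrArg (⟪·, gradient (hGauge K) a⟫) h0
    simp only [inner_add_left, real_inner_smul_left, inner_zero_left] at h
    rw [hpa, hab, hpb] at h
    have hA := pow_pos (hK.gauge_pos ha) 2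
    have hB := pow_pos (hK.gauge_pos hb) 2
    rcases hθa.eq_or_lt with rfl | hθa'
    · nlinarith
    · nlinarith [mul_pos hθa' hA, mul_nonneg hθb hB.le]
  · have h := fderiv_apply_sub_lt_fderiv_apply_sub isOpen_compl_singleton
      (hK.contDiffOn_hGauge.of_le (WithTop.coe_le_coe.2 le_top))
      (fun x hx v hv => hK.fderiv_fderiv_hGauge_pos_of_ne_zero hx hv) hne
      (fun z hz hz0 => h0 (hz0 ▸ hz))
    rw [← inner_gradient_left, ← inner_gradient_left, hab] at h
    exact lt_irrefl _ h

theorem bijOn_gradient_frontier (hK : IsSmoothStronglyConvexBody K) :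
    BijOn (gradient (hGauge K)) (frontier K) (frontier (polarBodyN K)) :=
  ⟨fun _ hx => hK.gradient_mem_frontier_polarBodyN hK.differentiableOn_hGauge hx,
    hK.injOn_gradient.mono fun _ hx => hK.ne_zero_of_mem_frontier hx,
    hK.surjOn_gradient_frontier hK.differentiableOn_hGauge⟩

theorem bijOn_gradient_compl_zero (hK : IsSmoothStronglyConvexBody K) :
    BijOn (gradient (hGauge K)) {0}ᶜ {0}ᶜ :=
  ⟨hK.mapsTo_gradient_compl_zero hK.differentiableOn_hGauge, hK.injOn_gradient,
    hK.surjOn_gradient_compl_zero hK.differentiableOn_hGauge⟩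

theorem existsUnique_mem_frontier_inner_eq_one (hK : IsSmoothStronglyConvexBody K)
    (hy : y ∈ frontier (polarBodyN K)) : ∃! x, x ∈ frontier K ∧ ⟪x, y⟫ = 1 := by
  obtain ⟨x, hx, hxy⟩ := hK.exists_mem_frontier_inner_eq_one hy
  refine ⟨x, ⟨hx, hxy⟩, fun x' ⟨hx', hx'y⟩ => hK.bijOn_gradient_frontier.injOn hx' hx ?_⟩
  rw [hK.gradient_eq_of_inner_eq_one hK.differentiableOn_hGauge hy hx' hx'y,
    hK.gradient_eq_of_inner_eq_one hK.differentiableOn_hGauge hy hx hxy]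

theorem contDiffAt_hGauge_polarBodyN (hK : IsSmoothStronglyConvexBody K) (hy : y ≠ 0) :
    ContDiffAt ℝ (⊤ : ℕ∞) (hGauge (polarBodyN K)) y := by
  obtain ⟨x₀, hx₀, rfl⟩ := hK.surjOn_gradient_compl_zero hK.differentiableOn_hGauge hy
  obtain ⟨g, -, hgx, hg, -, -, hinv⟩ := exists_localInverse_gradient (hK.contDiffAt_hGauge hx₀)
    fun v hv => hK.fderiv_fderiv_hGauge_pos_of_ne_zero hx₀ hv
  have heq : hGauge (polarBodyN K) =ᶠ[𝓝 (gradient (hGauge K) x₀)] hGauge K ∘ g := by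
    filter_upwards [hinv, hg.continuousAt.eventually_ne (by rwa [hgx])] with y hy hy0
    rw [Function.comp_apply, ← hK.hGauge_polarBodyN_gradient hK.differentiableOn_hGauge hy0, hy]
  exact ((hgx ▸ hK.contDiffAt_hGauge hx₀).comp _ hg).congr_of_eventuallyEq heq

theorem gradient_hGauge_polarBodyN_gradient (hK : IsSmoothStronglyConvexBody K) (hx : x ≠ 0) :
    gradient (hGauge (polarBodyN K)) (gradient (hGauge K) x) = x := by
  refine ((isPosHomogeneous_hGauge _).gradient.comp (isPosHomogeneous_hGauge K).gradient
    ).apply_eq_of_eqOn_preimage_one isPosHomogeneous_id (isPosHomogeneous_gauge K)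
    (fun u hu => ?_) (hK.gauge_pos hx)
  have hu' : u ∈ frontier K := hK.gauge_eq_one_iff_mem_frontier.1 hu
  have hv := hK.gradient_mem_frontier_polarBodyN hK.differentiableOn_hGauge hu'
  refine gradient_hGauge_eq_of_inner_eq_one (absorbent_nhds_zero hK.polar.mem_nhds_zero)
    (subset_polarBodyN_polarBodyN K (hK.isCompact.isClosed.frontier_subset hu'))
    (hK.polar.gauge_eq_one_iff_mem_frontier.2 hv) ?_
    ((hK.contDiffAt_hGauge_polarBodyN (hK.polar.ne_zero_of_mem_frontier hv)).differentiableAt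
      (by simp))
  rw [id_eq, real_inner_comm, inner_gradient_hGauge (hK.differentiableOn_hGauge.differentiableAt
    (isOpen_compl_singleton.mem_nhds (hK.ne_zero_of_mem_frontier hu'))), hu, one_pow]

theorem fderiv_fderiv_hGauge_polarBodyN_pos (hK : IsSmoothStronglyConvexBody K) (hy : y ≠ 0)
    {v : E} (hv : v ≠ 0) : 0 < fderiv ℝ (fderiv ℝ (hGauge (polarBodyN K))) y v v := by
  obtain ⟨x₀, hx₀, rfl⟩ := hK.surjOn_gradient_compl_zero hK.differentiableOn_hGauge hy
  obtain ⟨g, B, hgx, hg, hgB, hB, hinv⟩ := exists_localInverse_gradient (hK.contDiffAt_hGauge hx₀)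
    fun v hv => hK.fderiv_fderiv_hGauge_pos_of_ne_zero hx₀ hv
  have heq : gradient (hGauge (polarBodyN K)) =ᶠ[𝓝 (gradient (hGauge K) x₀)] g := by
    filter_upwards [hinv, hg.continuousAt.eventually_ne (by rwa [hgx])] with y hy hy0
    rw [← hK.gradient_hGauge_polarBodyN_gradient hy0, hy]
  rw [fderiv_fderiv_apply_eq_inner, heq.fderiv_eq, hgB.fderiv]
  exact hB v hv

theorem polar (hK : IsSmoothStronglyConvexBody K) :
    IsSmoothStronglyConvexBody (polarBodyN K) where
  toIsConvexBodyAroundZero := hK.toIsConvexBodyAroundZero.polar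
  contDiffOn_hGauge := fun _ hy => (hK.contDiffAt_hGauge_polarBodyN hy).contDiffWithinAt
  fderiv_fderiv_hGauge_pos := fun _ hy _ hv =>
    hK.fderiv_fderiv_hGauge_polarBodyN_pos (by rintro rfl; simp at hy) hv

end IsSmoothStronglyConvexBody

end Polar

/-- Section 3.1: for a strongly convex body `K ⊂ ℝⁿ` with smooth boundary and `0` in its
interior, the gradient map `∇h_K` maps `∂K` bijectively onto `∂K°`; for `y ∈ ∂K°` the
unique `x ∈ ∂K` with `⟪x, y⟫ = 1` is `x = (∇h_K)⁻¹(y)`; moreover `∇h_K` is a bijection of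
`ℝⁿ \ {0}` and `h_{K°} ∘ ∇h_K = h_K` there (i.e. `h_{K°}(y) = h_K((∇h_K)⁻¹(y))` for all
`y ≠ 0`); and `h_{K°}` is `C^∞` away from the origin with positive definite Hessian on the
unit sphere, so `K°` is also strongly convex with smooth boundary. -/
theorem gradient_gauge_sq_boundary_diffeo
    {n : ℕ} (K : Set (EuclideanSpace ℝ (Fin n)))
    (hKcomp : IsCompact K) (hKconv : Convex ℝ K) (hK0 : 0 ∈ interior K)
    (hsmooth : ContDiffOn ℝ (⊤ : ℕ∞) (hGauge K) {0}ᶜ)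
    (hhess : ∀ x : EuclideanSpace ℝ (Fin n), ‖x‖ = 1 →
      ∀ v : EuclideanSpace ℝ (Fin n), v ≠ 0 →
        0 < fderiv ℝ (fderiv ℝ (hGauge K)) x v v) :
    Set.BijOn (gradient (hGauge K)) (frontier K) (frontier (polarBodyN K)) ∧
    (∀ y ∈ frontier (polarBodyN K),
      ∃! x : EuclideanSpace ℝ (Fin n), x ∈ frontier K ∧ ⟪x, y⟫ = 1) ∧
    (∀ y ∈ frontier (polarBodyN K), ∀ x ∈ frontier K, ⟪x, y⟫ = 1 →
      gradient (hGauge K) x = y) ∧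
    Set.BijOn (gradient (hGauge K)) {(0 : EuclideanSpace ℝ (Fin n))}ᶜ
      {(0 : EuclideanSpace ℝ (Fin n))}ᶜ ∧
    (∀ x : EuclideanSpace ℝ (Fin n), x ≠ 0 →
      hGauge (polarBodyN K) (gradient (hGauge K) x) = hGauge K x) ∧
    ContDiffOn ℝ (⊤ : ℕ∞) (hGauge (polarBodyN K)) {0}ᶜ ∧
    (∀ y : EuclideanSpace ℝ (Fin n), ‖y‖ = 1 →
      ∀ v : EuclideanSpace ℝ (Fin n), v ≠ 0 →
        0 < fderiv ℝ (fderiv ℝ (hGauge (polarBodyN K))) y v v) := by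
  have hK : IsSmoothStronglyConvexBody K := ⟨⟨hKcomp, hKconv, hK0⟩, hsmooth, hhess⟩
  exact ⟨hK.bijOn_gradient_frontier, fun _ hy => hK.existsUnique_mem_frontier_inner_eq_one hy,
    fun _ hy _ hx hxy => hK.gradient_eq_of_inner_eq_one hK.differentiableOn_hGauge hy hx hxy,
    hK.bijOn_gradient_compl_zero,
    fun _ hx => hK.hGauge_polarBodyN_gradient hK.differentiableOn_hGauge hx,
    hK.polar.contDiffOn_hGauge, hK.polar.fderiv_fderiv_hGauge_pos⟩
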